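/- arXiv:2311.03512 — 2 statements merged into one kernel-verified Lean document; each statement's English description precedes it below -/
import Mathlib

section
/- Let E and M be finite index types. Let A be a unitary matrix over ℂ indexed by E × M, let Π be an orthogonal projection matrix indexed by E × M, let φ ∈ ℂ^E and m ∈ ℂ^M be unit vectors, and suppose Π·(A(φ ⊗ m)) = A(φ ⊗ m). Let σ be a positive semidefinite matrix indexed by M with Tr(σ) = 1 and mᴴ σ m ≥ 1 − λ for some real λ. Then Re(Tr(Π · A · ((φφᴴ) ⊗ₖ σ) · Aᴴ)) ≥ 1 − λ. -/
open scoped Matrix Kronecker ComplexOrder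

open Matrix

open scoped MatrixOrder

private lemma myMulVecMulVec {n n' p : Type*} [Fintype n] (C : Matrix p n ℂ)
    (a : n → ℂ) (b : n' → ℂ) : C * vecMulVec a b = vecMulVec (C *ᵥ a) b := by
  ext i j
  simp [mul_apply, vecMulVec_apply, mulVec, dotProduct, Finset.sum_mul, mul_assoc]

private lemma myVecMulVecMulVec {n n' : Type*} [Fintype n'] (a : n → ℂ) (b : n' → ℂ)
    (x : n' → ℂ) : vecMulVec a b *ᵥ x = (b ⬝ᵥ x) • a := by
  ext i
  simp [mulVec, vecMulVec_apply, dotProduct, Finset.sum_mul]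
  exact Finset.sum_congr rfl fun j _ => by ring

private lemma myTraceVecMulVecMul {n p : Type*} [Fintype n] [Fintype p]
    (a : n → ℂ) (b : p → ℂ) (C : Matrix p n ℂ) :
    (vecMulVec a b * C).trace = b ⬝ᵥ (C *ᵥ a) := by
  simp only [trace, diag, mul_apply, vecMulVec_apply, dotProduct, mulVec]
  rw [Finset.sum_comm]
  congr 1; ext j
  simp [Finset.mul_sum]
  congr 1; ext i
  ring

private lemma myKronConjT {a b c d : Type*} (X : Matrix a b ℂ) (Y : Matrix c d ℂ) :
    (X ⊗ₖ Y)ᴴ = Xᴴ ⊗ₖ Yᴴ := by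
  ext ⟨i, j⟩ ⟨k, l⟩
  simp [conjTranspose_apply, kroneckerMap_apply]

private lemma myTraceReNonneg {n : Type*} [Fintype n] [DecidableEq n] {ρ : Matrix n n ℂ}
    (h : ρ.PosSemidef) : 0 ≤ ρ.trace.re := by
  rw [trace, Complex.re_sum]
  refine Finset.sum_nonneg fun i _ => ?_
  have := h.re_dotProduct_nonneg (Pi.single i 1)
  simpa [mulVec_single, dotProduct, Pi.single_apply, Finset.sum_ite_eq'] using this

private lemma myTraceMulReNonneg {n : Type*} [Fintype n] [DecidableEq n] {S ρ : Matrix n n ℂ}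
    (hS : S.PosSemidef) (hρ : ρ.PosSemidef) : 0 ≤ ((S * ρ).trace).re := by
  have h1 : S * ρ = CFC.sqrt S * CFC.sqrt S * ρ := by rw [CFC.sqrt_mul_sqrt_self S hS.nonneg]
  have h2 : (CFC.sqrt S * CFC.sqrt S * ρ).trace = (CFC.sqrt S * ρ * CFC.sqrt S).trace := by
    exact (trace_mul_cycle (CFC.sqrt S) ρ (CFC.sqrt S)).symm
  have h3 : (CFC.sqrt S * ρ * CFC.sqrt S).PosSemidef := by
    have := hρ.mul_mul_conjTranspose_same (CFC.sqrt S)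
    rwa [(CFC.sqrt_nonneg S).posSemidef.isHermitian.eq] at this
  rw [h1, h2]
  exact myTraceReNonneg h3

/--
(Equation (4) of the paper.)  If Alice's final unitary `A`
applied to her real state `φ` and the real message `m` lands in the range of
the key projector `Π` (perfect correctness), and Eve's substituted message `σ`
(a density matrix) has fidelity at least `1 − λ` with the real message `m`,
then the measurement yields the key with probability at least `1 − λ`:
`Re(Tr(Π · A · ((φφᴴ) ⊗ₖ σ) · Aᴴ)) ≥ 1 − λ`.
-/
theorem alice_outputs_key_with_substituted_message
    {E M : Type} [Fintype E] [Fintype M] [DecidableEq E] [DecidableEq M]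
    (A : Matrix (E × M) (E × M) ℂ) (hA : Aᴴ * A = 1)
    (Pj : Matrix (E × M) (E × M) ℂ) (hPjH : Pjᴴ = Pj) (hPj2 : Pj * Pj = Pj)
    (φ : E → ℂ) (hφ : star φ ⬝ᵥ φ = 1)
    (m : M → ℂ) (hm : star m ⬝ᵥ m = 1)
    (hfix : Pj *ᵥ (A *ᵥ fun p : E × M => φ p.1 * m p.2)
      = A *ᵥ fun p : E × M => φ p.1 * m p.2)
    (σ : Matrix M M ℂ) (hσ : σ.PosSemidef) (hσtr : σ.trace = 1)
    (lam : ℝ) (hfid : 1 - lam ≤ (star m ⬝ᵥ (σ *ᵥ m)).re) :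
    1 - lam ≤ (Pj * A * ((Matrix.vecMulVec φ (star φ)) ⊗ₖ σ) * Aᴴ).trace.re := by
  have hAA : A * Aᴴ = 1 := mul_eq_one_comm.mp hA
  set v : E × M → ℂ := fun p => φ p.1 * m p.2 with hv_def
  set W : Matrix (E × M) (E × M) ℂ := vecMulVec v (star v) with hW_def
  set P : Matrix (E × M) (E × M) ℂ := Aᴴ * Pj * A with hP_def
  set ρ : Matrix (E × M) (E × M) ℂ := (vecMulVec φ (star φ)) ⊗ₖ σ with hρ_def
  -- v is a unit vector
  have hv : star v ⬝ᵥ v = 1 := by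
    have : star v ⬝ᵥ v = (star φ ⬝ᵥ φ) * (star m ⬝ᵥ m) := by
      simp only [dotProduct, Finset.sum_mul_sum, ← Finset.univ_product_univ, Finset.sum_product]
      exact Finset.sum_congr rfl fun e _ => Finset.sum_congr rfl fun x _ => by
        simp [hv_def, Pi.star_apply]; ring
    rw [this, hφ, hm, one_mul]
  -- P fixes v
  have hPv : P *ᵥ v = v := by
    rw [hP_def, ← Matrix.mulVec_mulVec, ← Matrix.mulVec_mulVec, hfix,
      Matrix.mulVec_mulVec, hA, Matrix.one_mulVec]
  have hPH : Pᴴ = P := by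
    simp [hP_def, Matrix.conjTranspose_mul, hPjH, Matrix.mul_assoc]
  have hPP : P * P = P := by
    rw [hP_def]
    calc (Aᴴ * Pj * A) * (Aᴴ * Pj * A) = Aᴴ * Pj * (A * Aᴴ) * Pj * A := by
          simp only [Matrix.mul_assoc]
      _ = Aᴴ * Pj * A := by rw [hAA, Matrix.mul_one, Matrix.mul_assoc Aᴴ Pj Pj, hPj2]
  have hWH : Wᴴ = W := by
    ext i j
    simp [hW_def, Matrix.conjTranspose_apply, Matrix.vecMulVec_apply, mul_comm]
  have hPW : P * W = W := by rw [hW_def, myMulVecMulVec, hPv]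
  have hWP : W * P = W := by
    have := congrArg Matrix.conjTranspose hPW
    rwa [Matrix.conjTranspose_mul, hWH, hPH] at this
  have hWW : W * W = W := by
    rw [hW_def, myMulVecMulVec, myVecMulVecMulVec, hv, one_smul]
  -- 1 - W is PSD
  have hIW : (1 - W).PosSemidef := by
    have h1 : (1 - W)ᴴ = 1 - W := by
      rw [Matrix.conjTranspose_sub, hWH, Matrix.conjTranspose_one]
    have h2 : (1 - W) = (1 - W)ᴴ * (1 - W) := by
      rw [h1, Matrix.sub_mul, Matrix.mul_sub, Matrix.mul_sub, hWW]
      simp only [Matrix.one_mul, Matrix.mul_one]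
      abel
    rw [h2]
    exact Matrix.posSemidef_conjTranspose_mul_self _
  -- P - W is PSD
  have hPWpsd : (P - W).PosSemidef := by
    have h1 : P * (1 - W) * Pᴴ = P - W := by
      rw [hPH, Matrix.mul_sub, Matrix.mul_one, Matrix.sub_mul, hPP, hPW, hWP]
    have := hIW.mul_mul_conjTranspose_same P
    rwa [h1] at this
  -- ρ is PSD
  have hρpsd : ρ.PosSemidef := by
    set B := CFC.sqrt σ with hB_def
    have hB : B * B = σ := CFC.sqrt_mul_sqrt_self σ hσ.nonneg
    have hBH : Bᴴ = B := (CFC.sqrt_nonneg σ).posSemidef.isHermitian.eq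
    set D : Matrix (Unit × M) (E × M) ℂ := (Matrix.replicateRow Unit (star φ)) ⊗ₖ B with hD_def
    have hDH : Dᴴ = (Matrix.replicateCol Unit φ) ⊗ₖ B := by
      rw [hD_def, myKronConjT, Matrix.conjTranspose_replicateRow, star_star, hBH]
    have : Dᴴ * D = ρ := by
      rw [hDH, hD_def, ← Matrix.mul_kronecker_mul, hB, hρ_def, Matrix.vecMulVec_eq Unit]
    rw [← this]
    exact Matrix.posSemidef_conjTranspose_mul_self _
  -- W as a Kronecker product
  have hWkron : W = (vecMulVec φ (star φ)) ⊗ₖ (vecMulVec m (star m)) := by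
    ext ⟨e, x⟩ ⟨e', x'⟩
    simp [hW_def, hv_def, Matrix.vecMulVec_apply, Matrix.kroneckerMap_apply]
    ring
  -- trace computations
  have htr1 : (Pj * A * ρ * Aᴴ).trace = (P * ρ).trace := by
    rw [Matrix.trace_mul_comm, hP_def]
    simp only [Matrix.mul_assoc]
  have htrW : (W * ρ).trace = star m ⬝ᵥ (σ *ᵥ m) := by
    rw [hWkron, hρ_def, ← Matrix.mul_kronecker_mul, Matrix.trace_kronecker,
      myTraceVecMulVecMul, myTraceVecMulVecMul, myVecMulVecMulVec, hφ, one_smul, hφ,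
      one_mul]
  have hsplit : (P * ρ).trace = ((P - W) * ρ).trace + (W * ρ).trace := by
    rw [Matrix.sub_mul, Matrix.trace_sub]
    ring
  have hnn : 0 ≤ (((P - W) * ρ).trace).re := myTraceMulReNonneg hPWpsd hρpsd
  rw [htr1, hsplit, htrW, Complex.add_re]
  linarith
end

section
/- Let E and M be finite index types. Let A be a unitary matrix and Π an orthogonal projection matrix, both over ℂ and indexed by E × M. Let ψ ∈ ℂ^E be a unit vector, let (m_i)_{i ∈ J} be a finite orthonormal family in ℂ^M, let q : J → ℝ with q_i ≥ 0, and set μ = Σ_j q_j · (m_j m_jᴴ). Suppose that for every i ∈ J, ‖Π · A · (ψ ⊗ m_i)‖² ≥ 1 − λ. Then for every i ∈ J: Re((ψ ⊗ m_i)ᴴ · Aᴴ · Π · A · ((ψψᴴ) ⊗ₖ μ) · (ψ ⊗ m_i)) = q_i · ‖Π · A · (ψ ⊗ m_i)‖² ≥ q_i · (1 − λ). -/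
/-!
With `v = ψ ⊗ mᵢ`, the state `(ψψᴴ) ⊗ₖ μ` acts on `v` factorwise: `ψψᴴ` fixes the unit vector `ψ`
and, by orthonormality, `μ mᵢ = qᵢ mᵢ`. Hence the quadratic form of `Aᴴ Π A (ψψᴴ ⊗ₖ μ)` at `v` is
`qᵢ` times that of `Aᴴ Π A = (Π A)ᴴ (Π A)`, which is `‖Π A v‖²`.
-/

open scoped Matrix Kronecker

namespace Matrix

variable {l m n p J α : Type*}

def vecKronecker [Mul α] (x : m → α) (y : n → α) : m × n → α :=
  fun ij => x ij.1 * y ij.2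

theorem kronecker_mulVec_vecKronecker [CommSemiring α] [Fintype m] [Fintype p]
    (A : Matrix l m α) (B : Matrix n p α) (x : m → α) (y : p → α) :
    (A ⊗ₖ B) *ᵥ vecKronecker x y = vecKronecker (A *ᵥ x) (B *ᵥ y) := by
  ext ⟨i, k⟩
  simp only [mulVec, dotProduct, vecKronecker, kroneckerMap_apply, Fintype.sum_prod_type,
    Finset.sum_mul_sum]
  exact Finset.sum_congr rfl fun _ _ => Finset.sum_congr rfl fun _ _ => by ring

theorem sum_smul_vecMulVec_star_mulVec_of_orthonormal [CommSemiring α] [StarRing α]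
    [Fintype n] [Fintype J] [DecidableEq J] (v : J → n → α)
    (hv : ∀ i j, star (v j) ⬝ᵥ v i = if i = j then 1 else 0) (c : J → α) (i : J) :
    (∑ j, c j • vecMulVec (v j) (star (v j))) *ᵥ v i = c i • v i := by
  simp only [sum_mulVec, smul_mulVec, vecMulVec_mulVec, hv, op_smul_eq_smul]
  rw [Fintype.sum_eq_single i fun j hj => by simp [Ne.symm hj]]
  simp

theorem star_dotProduct_conjTranspose_mul_self_mulVec [CommSemiring α] [StarRing α]
    [Fintype m] [Fintype n] (B : Matrix m n α) (v : n → α) :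
    star v ⬝ᵥ ((Bᴴ * B) *ᵥ v) = star (B *ᵥ v) ⬝ᵥ (B *ᵥ v) := by
  rw [← mulVec_mulVec, dotProduct_mulVec, vecMul_conjTranspose, star_star]

end Matrix

theorem IsStarProjection.star_mul_mul_eq_star_mul_self {R : Type*} [Semigroup R] [StarMul R]
    {p : R} (hp : IsStarProjection p) (a : R) :
    star a * p * a = star (p * a) * (p * a) := by
  rw [star_mul, hp.isSelfAdjoint.star_eq, ← mul_assoc, mul_assoc (star a) p p,
    hp.isIdempotentElem.eq]

open Matrix in
theorem eve_message_close_to_real_message_general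
    {E M J : Type} [Fintype E] [Fintype M] [Fintype J]
    [DecidableEq J]
    (A : Matrix (E × M) (E × M) ℂ)
    (Pj : Matrix (E × M) (E × M) ℂ) (hPjH : Pjᴴ = Pj) (hPj2 : Pj * Pj = Pj)
    (ψ : E → ℂ) (hψ : star ψ ⬝ᵥ ψ = 1)
    (m : J → M → ℂ)
    (hm : ∀ i j : J, star (m j) ⬝ᵥ m i = if i = j then 1 else 0)
    (q : J → ℝ) (hq : ∀ j, 0 ≤ q j)
    (μ : Matrix M M ℂ)
    (hμ : μ = ∑ j, (q j : ℂ) • Matrix.vecMulVec (m j) (star (m j)))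
    (lam : ℝ)
    (hkey : ∀ i : J,
      1 - lam ≤ (star ((Pj * A) *ᵥ fun p : E × M => ψ p.1 * m i p.2) ⬝ᵥ
        ((Pj * A) *ᵥ fun p : E × M => ψ p.1 * m i p.2)).re) :
    ∀ i : J,
      (star (fun p : E × M => ψ p.1 * m i p.2) ⬝ᵥ
          ((Aᴴ * Pj * A * (Matrix.vecMulVec ψ (star ψ) ⊗ₖ μ)) *ᵥ
            fun p : E × M => ψ p.1 * m i p.2)).re
        = q i * (star ((Pj * A) *ᵥ fun p : E × M => ψ p.1 * m i p.2) ⬝ᵥ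
            ((Pj * A) *ᵥ fun p : E × M => ψ p.1 * m i p.2)).re ∧
      q i * (1 - lam)
        ≤ q i * (star ((Pj * A) *ᵥ fun p : E × M => ψ p.1 * m i p.2) ⬝ᵥ
            ((Pj * A) *ᵥ fun p : E × M => ψ p.1 * m i p.2)).re := by
  intro i
  rw [show (fun p : E × M => ψ p.1 * m i p.2) = vecKronecker ψ (m i) from rfl]
  have hstate : (vecMulVec ψ (star ψ) ⊗ₖ μ) *ᵥ vecKronecker ψ (m i) =
      (q i : ℂ) • vecKronecker ψ (m i) := by
    rw [kronecker_mulVec_vecKronecker, vecMulVec_mulVec, hψ, hμ,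
      sum_smul_vecMulVec_star_mulVec_of_orthonormal m hm]
    ext ⟨e, x⟩
    simp only [vecKronecker, MulOpposite.op_one, one_smul, Pi.smul_apply, smul_eq_mul]
    ring
  have hcompress : Aᴴ * Pj * A = (Pj * A)ᴴ * (Pj * A) :=
    (isStarProjection_iff' (p := Pj)).2 ⟨hPj2, hPjH⟩ |>.star_mul_mul_eq_star_mul_self A
  refine ⟨?_, mul_le_mul_of_nonneg_left (hkey i) (hq i)⟩
  rw [← mulVec_mulVec, hstate, mulVec_smul, dotProduct_smul, hcompress,
    star_dotProduct_conjTranspose_mul_self_mulVec, smul_eq_mul, Complex.re_ofReal_mul]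

/--
(Quantitative core of Equation (2) in Lemma 3.3.)  If for
every pure component `m_i` of Bob's mixed message `μ = Σ_j q_j · m_j m_jᴴ` the
state `A(ψ ⊗ m_i)` lies in the range of the key projector `Π` up to error `λ`,
i.e. `‖Π·A·(ψ ⊗ m_i)‖² ≥ 1 − λ`, then for every `i`:
`Re((ψ ⊗ m_i)ᴴ · Aᴴ·Π·A · ((ψψᴴ) ⊗ₖ μ) · (ψ ⊗ m_i))
  = q_i · ‖Π·A·(ψ ⊗ m_i)‖² ≥ q_i · (1 − λ)`.
-/
theorem eve_message_close_to_real_message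
    {E M J : Type} [Fintype E] [Fintype M] [Fintype J]
    [DecidableEq E] [DecidableEq M] [DecidableEq J]
    (A : Matrix (E × M) (E × M) ℂ) (hA : Aᴴ * A = 1)
    (Pj : Matrix (E × M) (E × M) ℂ) (hPjH : Pjᴴ = Pj) (hPj2 : Pj * Pj = Pj)
    (ψ : E → ℂ) (hψ : star ψ ⬝ᵥ ψ = 1)
    (m : J → M → ℂ)
    (hm : ∀ i j : J, star (m j) ⬝ᵥ m i = if i = j then 1 else 0)
    (q : J → ℝ) (hq : ∀ j, 0 ≤ q j)
    (μ : Matrix M M ℂ)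
    (hμ : μ = ∑ j, (q j : ℂ) • Matrix.vecMulVec (m j) (star (m j)))
    (lam : ℝ)
    (hkey : ∀ i : J,
      1 - lam ≤ (star ((Pj * A) *ᵥ fun p : E × M => ψ p.1 * m i p.2) ⬝ᵥ
        ((Pj * A) *ᵥ fun p : E × M => ψ p.1 * m i p.2)).re) :
    ∀ i : J,
      (star (fun p : E × M => ψ p.1 * m i p.2) ⬝ᵥ
          ((Aᴴ * Pj * A * (Matrix.vecMulVec ψ (star ψ) ⊗ₖ μ)) *ᵥ
            fun p : E × M => ψ p.1 * m i p.2)).re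
        = q i * (star ((Pj * A) *ᵥ fun p : E × M => ψ p.1 * m i p.2) ⬝ᵥ
            ((Pj * A) *ᵥ fun p : E × M => ψ p.1 * m i p.2)).re ∧
      q i * (1 - lam)
        ≤ q i * (star ((Pj * A) *ᵥ fun p : E × M => ψ p.1 * m i p.2) ⬝ᵥ
            ((Pj * A) *ᵥ fun p : E × M => ψ p.1 * m i p.2)).re :=
  eve_message_close_to_real_message_general A Pj hPjH hPj2 ψ hψ m hm q hq μ hμ lam hkey
end
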